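/- arXiv:2102.11630 — 2 statements merged into one kernel-verified Lean document; each statement's English description precedes it below -/
import Mathlib

section
/- The majority predicate on ℕ² does not admit a cutoff: for every K ∈ ℕ there exist multisets L, L' : Fin 2 → ℕ with ⌊L⌋_K = ⌊L'⌋_K but (L 0 > L 1) ≠ (L' 0 > L' 1). -/
/-- The cutoff of a multiset `M : X → ℕ` at threshold `β`. -/
def cutoff {X : Type*} (β : ℕ) (M : X → ℕ) : X → ℕ := fun x => min (M x) β

theorem stmt_6 :
    ∀ K : ℕ, ∃ L L' : Fin 2 → ℕ,
      cutoff K L = cutoff K L' ∧ ¬ ((L 0 > L 1) ↔ (L' 0 > L' 1)) := by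
  intro K
  refine ⟨![K+1, K], ![K, K], ?_, ?_⟩
  · funext x
    fin_cases x <;> simp [cutoff]
  · simp
end

section
/- Monotonicity of phase counts in three-phase protocols: let G = (V, E) be a finite connected graph and pc : V × ℕ → ℕ a function with pc(v, 0) = 0, pc(v, i+1) - pc(v, i) ∈ {0, 1} for all v and i, and such that for all adjacent u, v and all i, if pc(u, i) + 1 < pc(v, i) + (pc(v,i+1) - pc(v,i)) then pc(v, i+1) = pc(v, i). Then for all adjacent u, v and all i, |pc(u, i) - pc(v, i)| ≤ 1. -/
theorem stmt_18 {V : Type*} [Fintype V] (G : SimpleGraph V) (hconn : G.Connected)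
    (pc : V → ℕ → ℕ)
    (h0 : ∀ v, pc v 0 = 0)
    (hstep : ∀ v i, pc v i ≤ pc v (i + 1) ∧ pc v (i + 1) ≤ pc v i + 1)
    (hbound : ∀ u v, G.Adj u v → ∀ i,
      pc u i + 1 < pc v i + (pc v (i + 1) - pc v i) → pc v (i + 1) = pc v i) :
    ∀ u v, G.Adj u v → ∀ i, pc u i ≤ pc v i + 1 ∧ pc v i ≤ pc u i + 1 := by
  intro u v huv i
  induction i with
  | zero => simp [h0]
  | succ i ih =>
    have h1 := hstep u i
    have h2 := hstep v i
    rcases lt_or_ge (pc u i + 1) (pc v (i + 1)) with hc | hc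
    · have hb : pc v (i + 1) = pc v i := hbound u v huv i (by omega)
      rcases lt_or_ge (pc v i + 1) (pc u (i + 1)) with hd | hd
      · have hb2 : pc u (i + 1) = pc u i := hbound v u huv.symm i (by omega)
        omega
      · omega
    · rcases lt_or_ge (pc v i + 1) (pc u (i + 1)) with hd | hd
      · have hb2 : pc u (i + 1) = pc u i := hbound v u huv.symm i (by omega)
        omega
      · omega
end
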